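/- For 0 < β < 1 and n ≥ 1, the partial sum γ_n = Σ_{k=0}^n (-1)^k binom(β, k) satisfies 0 < γ_n < 1. -/
import Mathlib


/-- Generalized binomial coefficient `β(β-1)⋯(β-k+1)/k!` for real `β`. -/
noncomputable def genBinom (β : ℝ) (k : ℕ) : ℝ :=
  (∏ i ∈ Finset.range k, (β - i)) / (k.factorial : ℝ)

/-- `γ_n = Σ_{k=0}^n (-1)^k binom(β,k)`. -/
noncomputable def ctrwGamma (β : ℝ) (n : ℕ) : ℝ :=
  ∑ k ∈ Finset.range (n + 1), (-1 : ℝ) ^ k * genBinom β k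

lemma genBinom_pascal (β : ℝ) (k : ℕ) :
    genBinom β (k + 1) = genBinom (β - 1) (k + 1) + genBinom (β - 1) k := by
  have hshift : ∏ i ∈ Finset.range (k + 1), (β - i)
      = (∏ i ∈ Finset.range k, (β - 1 - i)) * β := by
    rw [Finset.prod_range_succ']
    push_cast
    congr 1
    · apply Finset.prod_congr rfl; intro i _; ring
    · simp
  have h2 : ∏ i ∈ Finset.range (k + 1), (β - 1 - i)
      = (∏ i ∈ Finset.range k, (β - 1 - i)) * (β - 1 - k) := Finset.prod_range_succ _ _
  have hfac : ((k + 1).factorial : ℝ) = (k + 1) * k.factorial := by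
    push_cast [Nat.factorial_succ]; ring
  have hk : (k.factorial : ℝ) ≠ 0 := by positivity
  have hk1 : ((k : ℝ) + 1) ≠ 0 := by positivity
  simp only [genBinom, hshift, h2, hfac]
  field_simp
  ring

lemma ctrwGamma_eq (β : ℝ) (n : ℕ) :
    ctrwGamma β n = (-1 : ℝ) ^ n * genBinom (β - 1) n := by
  induction n with
  | zero => simp [ctrwGamma, genBinom]
  | succ n ih =>
      rw [ctrwGamma, Finset.sum_range_succ, ← ctrwGamma, ih, genBinom_pascal]
      ring

theorem stmt1 (β : ℝ) (hβ0 : 0 < β) (hβ1 : β < 1) (n : ℕ) (hn : 1 ≤ n) :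
    0 < ctrwGamma β n ∧ ctrwGamma β n < 1 := by
  have key : ctrwGamma β n = (∏ i ∈ Finset.range n, ((i : ℝ) + 1 - β)) / n.factorial := by
    rw [ctrwGamma_eq, genBinom, mul_div_assoc']
    congr 1
    rw [show ((-1:ℝ))^n = ∏ _i ∈ Finset.range n, (-1:ℝ) by
      rw [Finset.prod_const, Finset.card_range], ← Finset.prod_mul_distrib]
    apply Finset.prod_congr rfl; intro i _; ring
  have hpos : ∀ i ∈ Finset.range n, 0 < (i : ℝ) + 1 - β := by
    intro i _
    have : (0 : ℝ) ≤ i := Nat.cast_nonneg i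
    linarith
  have hfac : (0 : ℝ) < n.factorial := by positivity
  constructor
  · rw [key]
    exact div_pos (Finset.prod_pos hpos) hfac
  · rw [key, div_lt_one hfac]
    have hfact : (n.factorial : ℝ) = ∏ i ∈ Finset.range n, ((i : ℝ) + 1) := by
      rw [← Finset.prod_range_add_one_eq_factorial n]; push_cast; ring
    rw [hfact]
    apply Finset.prod_lt_prod_of_nonempty hpos
    · intro i _; linarith
    · exact Finset.nonempty_range_iff.mpr (by omega)
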